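/- arXiv:2508.12578 — 2 statements merged into one kernel-verified Lean document; each statement's English description precedes it below -/
import Mathlib

section
/- Let r ≥ 1 be an integer and 0 < ε < 1/4. For all sufficiently large n, if G is a B_{r+1}-free simple graph on n vertices with e(G) ≥ (1/4 − ε)n², then the set L = {v ∈ V(G) : d(v) ≤ (1/2 − 4√ε)n} of low-degree vertices satisfies |L| ≤ √ε · n. -/
open SimpleGraph Set

/-- `G` contains no book `B_{r+1}`, i.e. no two adjacent vertices of `G` have at least
`r + 1` common neighbours. -/
def BookFree {V : Type*} (r : ℕ) (G : SimpleGraph V) : Prop :=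
  ∀ u v : V, G.Adj u v → ({w : V | G.Adj u w ∧ G.Adj v w}).ncard ≤ r

/-!
Suppose more than `√ε n` vertices have degree at most `(1/2 - 4√ε)n` and delete a set `T` of
exactly `⌈√ε n⌉` of them. In a `B_{r+1}`-free graph on `m` vertices the two ends of an edge have
degree sum at most `m + r`; summing `d(u) + d(v)` over the edges and applying Cauchy–Schwarz to
`∑ d(v)` gives `4e ≤ m(m + r)` for the graph that remains. Adding back the at most
`|T|(1/2 - 4√ε)n` edges at `T` leaves `e(G) ≤ n²/4 - (15/4)εn² + O(rn)`, below `(1/4 - ε)n²`.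
-/

open Finset

namespace SimpleGraph

variable {V : Type*} [Fintype V] (G : SimpleGraph V) [DecidableRel G.Adj]

theorem sum_sum_neighborFinset {M : Type*} [AddCommMonoid M] (f : V → M) :
    ∑ v, ∑ u ∈ G.neighborFinset v, f u = ∑ u, G.degree u • f u := by
  rw [sum_comm' (t' := univ) (s' := fun u => G.neighborFinset u) (by simp [adj_comm])]
  simp [card_neighborFinset_eq_degree]

theorem two_mul_sum_degree_sq_le {c : ℕ}
    (hc : ∀ u v, G.Adj u v → G.degree u + G.degree v ≤ c) :
    2 * ∑ v, G.degree v ^ 2 ≤ c * ∑ v, G.degree v :=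
  calc 2 * ∑ v, G.degree v ^ 2
      = ∑ v, ∑ u ∈ G.neighborFinset v, (G.degree v + G.degree u) := by
        simp only [sum_add_distrib, sum_const, card_neighborFinset_eq_degree,
          sum_sum_neighborFinset, smul_eq_mul, sq, two_mul]
    _ ≤ ∑ v, ∑ _u ∈ G.neighborFinset v, c :=
        sum_le_sum fun v _ => sum_le_sum fun u hu => hc v u ((G.mem_neighborFinset v u).1 hu)
    _ = c * ∑ v, G.degree v := by
        simp only [sum_const, card_neighborFinset_eq_degree, smul_eq_mul, mul_sum, mul_comm]

theorem four_mul_card_edgeFinset_le_of_degree_add_degree_le {c : ℕ}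
    (hc : ∀ u v, G.Adj u v → G.degree u + G.degree v ≤ c) :
    4 * #G.edgeFinset ≤ Fintype.card V * c := by
  obtain he | he := Nat.eq_zero_or_pos #G.edgeFinset
  · simp [he]
  have hCS : (2 * #G.edgeFinset) ^ 2 ≤ Fintype.card V * ∑ v, G.degree v ^ 2 := by
    rw [← sum_degrees_eq_twice_card_edges]
    exact sq_sum_le_card_mul_sum_sq
  have hsq := G.two_mul_sum_degree_sq_le hc
  rw [sum_degrees_eq_twice_card_edges] at hsq
  refine Nat.le_of_mul_le_mul_right ?_ he
  nlinarith

theorem card_edgeFinset_le_card_edgeFinset_induce_add_sum_degree [DecidableEq V]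
    (s : Finset V) :
    #G.edgeFinset ≤ #(G.induce ↑s).edgeFinset + ∑ v ∈ sᶜ, G.degree v := by
  rw [← card_filter_edgeFinset_toFinset_subset, ← card_filter_add_card_filter_not
    (fun e : Sym2 V => e.toFinset ⊆ s)]
  gcongr
  calc #{e ∈ G.edgeFinset | ¬e.toFinset ⊆ s}
      ≤ #(sᶜ.biUnion fun v => G.incidenceFinset v) := by
        refine card_le_card fun e he => ?_
        obtain ⟨he, hes⟩ := mem_filter.1 he
        obtain ⟨v, hve, hvs⟩ := Finset.not_subset.1 hes
        exact mem_biUnion.2 ⟨v, mem_compl.2 hvs,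
          (G.mem_incidenceFinset v e).2 ⟨mem_edgeFinset.1 he, Sym2.mem_toFinset.1 hve⟩⟩
    _ ≤ ∑ v ∈ sᶜ, G.degree v :=
        card_biUnion_le.trans_eq (by simp [card_incidenceFinset_eq_degree])

end SimpleGraph

namespace BookFree

variable {V : Type*} {r : ℕ} {G : SimpleGraph V}

theorem degree_add_degree_le [Fintype V] [DecidableRel G.Adj] (hG : BookFree r G)
    {u v : V} (huv : G.Adj u v) : G.degree u + G.degree v ≤ Fintype.card V + r := by
  classical
  have hcommon : #(G.neighborFinset u ∩ G.neighborFinset v) ≤ r := by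
    rw [← Set.ncard_coe_finset]
    convert hG u v huv using 2
    ext w
    simp
  rw [← card_neighborFinset_eq_degree, ← card_neighborFinset_eq_degree,
    ← card_union_add_card_inter]
  exact add_le_add (card_le_univ _) hcommon

theorem induce [Finite V] (hG : BookFree r G) (s : Set V) : BookFree r (G.induce s) :=
  fun u v huv => (ncard_le_ncard_of_injOn Subtype.val (fun _ hw => hw)
    Subtype.val_injective.injOn).trans (hG u v huv)

theorem four_mul_card_edgeFinset_le [Fintype V] [DecidableRel G.Adj] (hG : BookFree r G) :
    4 * #G.edgeFinset ≤ Fintype.card V * (Fintype.card V + r) :=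
  G.four_mul_card_edgeFinset_le_of_degree_add_degree_le fun _ _ => hG.degree_add_degree_le

theorem four_mul_card_edgeFinset_le_add_sum_degree [Fintype V] [DecidableEq V]
    [DecidableRel G.Adj] (hG : BookFree r G) (T : Finset V) :
    4 * #G.edgeFinset ≤ #Tᶜ * (#Tᶜ + r) + 4 * ∑ v ∈ T, G.degree v := by
  have h := G.card_edgeFinset_le_card_edgeFinset_induce_add_sum_degree Tᶜ
  have hT := (hG.induce (Tᶜ : Finset V)).four_mul_card_edgeFinset_le
  simp only [compl_compl, coe_sort_coe, Fintype.card_coe] at h hT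
  omega

end BookFree

-- `t` stands for `|T| = ⌈s n⌉` and the left side for the resulting bound on `4 e(G)`.
theorem four_mul_edge_bound_lt {n r s t : ℝ} (hs : 0 < s) (hr : 0 ≤ r) (hn : 1 ≤ n)
    (hrn : r + 2 ≤ s ^ 2 * n) (ht : s * n ≤ t) (ht' : t ≤ s * n + 1) :
    (n - t) * (n - t + r) + 4 * t * ((1 / 2 - 4 * s) * n) < 4 * ((1 / 4 - s ^ 2) * n ^ 2) := by
  have hsn : 1 ≤ s * n := by nlinarith
  have hsq : t ^ 2 ≤ t * (s * n + 1) := by nlinarith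
  have hlin : t * (1 - 15 * (s * n)) ≤ s * n * (1 - 15 * (s * n)) := by nlinarith
  have hsn2 : s * n ≤ (s * n) ^ 2 := by nlinarith
  nlinarith

theorem stmt_8_general (r : ℕ) (ε : ℝ) (hε : 0 < ε) :
    ∃ n₀ : ℕ, ∀ n : ℕ, n₀ ≤ n →
      ∀ G : SimpleGraph (Fin n), BookFree r G →
        (1 / 4 - ε) * (n : ℝ) ^ 2 ≤ (G.edgeSet.ncard : ℝ) →
        (({v : Fin n |
            ((G.neighborSet v).ncard : ℝ) ≤ (1 / 2 - 4 * Real.sqrt ε) * (n : ℝ)}).ncard : ℝ)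
          ≤ Real.sqrt ε * (n : ℝ) := by
  classical
  refine ⟨⌈(r + 2 : ℝ) / ε⌉₊, fun n hn G hG hE => ?_⟩
  set s := √ε
  have hrn : r + 2 ≤ s ^ 2 * n := by
    rw [Real.sq_sqrt hε.le, mul_comm, ← div_le_iff₀ hε]
    exact Nat.ceil_le.1 hn
  have hn1 : (1 : ℝ) ≤ n := by
    have : 0 < ⌈(r + 2 : ℝ) / ε⌉₊ := Nat.ceil_pos.2 (by positivity)
    exact_mod_cast this.trans_le hn
  set L := ({v | (G.degree v : ℝ) ≤ (1 / 2 - 4 * s) * n} : Finset (Fin n))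
  have hL : {v | ((G.neighborSet v).ncard : ℝ) ≤ (1 / 2 - 4 * s) * n}.ncard = #L := by
    rw [← ncard_coe_finset]
    congr 1
    ext v
    simp [L, ← card_neighborFinset_eq_degree, neighborFinset, ncard_eq_toFinset_card']
  rw [hL]
  by_contra! hsL
  obtain ⟨T, hTL, hT⟩ := exists_subset_card_eq (Nat.ceil_le.2 hsL.le)
  have hdeg : ∑ v ∈ T, (G.degree v : ℝ) ≤ #T * ((1 / 2 - 4 * s) * n) := by
    rw [← nsmul_eq_mul]
    exact sum_le_card_nsmul _ _ _ fun v hv => (mem_filter.1 (hTL hv)).2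
  have hTc : (#Tᶜ : ℝ) = n - #T := by
    rw [card_compl, Fintype.card_fin, Nat.cast_sub (by simpa using card_le_univ T)]
  have hbook : 4 * (#G.edgeFinset : ℝ) ≤ #Tᶜ * (#Tᶜ + r) + 4 * ∑ v ∈ T, (G.degree v : ℝ) := by
    exact_mod_cast hG.four_mul_card_edgeFinset_le_add_sum_degree T
  have hE' : (G.edgeSet.ncard : ℝ) = #G.edgeFinset := by
    simp [ncard_eq_toFinset_card', edgeFinset]
  have hlt := four_mul_edge_bound_lt (Real.sqrt_pos.2 hε) r.cast_nonneg hn1 hrn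
    (hT ▸ Nat.le_ceil _) (hT ▸ (Nat.ceil_lt_add_one (by positivity)).le)
  rw [Real.sq_sqrt hε.le] at hlt
  rw [hTc] at hbook
  linarith

/-- Let `r ≥ 1` and `0 < ε < 1/4`.  For all sufficiently large `n`: if `G` is a `B_{r+1}`-free
graph on `n` vertices with `e(G) ≥ (1/4 - ε)n²`, then the set
`L = {v : d(v) ≤ (1/2 - 4√ε)n}` of low-degree vertices satisfies `|L| ≤ √ε·n`. -/
theorem stmt_8 (r : ℕ) (hr : 1 ≤ r) (ε : ℝ) (hε : 0 < ε) (hε' : ε < 1 / 4) :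
    ∃ n₀ : ℕ, ∀ n : ℕ, n₀ ≤ n →
      ∀ G : SimpleGraph (Fin n), BookFree r G →
        (1 / 4 - ε) * (n : ℝ) ^ 2 ≤ (G.edgeSet.ncard : ℝ) →
        (({v : Fin n |
            ((G.neighborSet v).ncard : ℝ) ≤ (1 / 2 - 4 * Real.sqrt ε) * (n : ℝ)}).ncard : ℝ)
          ≤ Real.sqrt ε * (n : ℝ) :=
  stmt_8_general r ε hε
end

section
/- Let r ≥ 1 be an integer and ε > 0 with 60r√ε < 1 and 90√ε < 1. For all sufficiently large n the following holds. Let G be a B_{r+1}-free simple graph on n vertices with a partition V(G) = S ∪ T that realizes a maximum cut and satisfies (1/2 − (3/2)√ε)n ≤ |S|, |T| ≤ (1/2 + (3/2)√ε)n, let L = {v ∈ V(G) : d(v) ≤ (1/2 − 4√ε)n}, and let W = {v ∈ S : d_S(v) ≥ (7/2)√ε·n} ∪ {v ∈ T : d_T(v) ≥ (7/2)√ε·n}. If moreover |L| ≤ √ε·n and |W| ≤ (4/7)√ε·n, then W ⊆ L. -/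
open SimpleGraph Set

/-- `d_X(v)`: the number of neighbours of `v` lying in `X`. -/
noncomputable def degIn {V : Type*} (G : SimpleGraph V) (X : Set V) (v : V) : ℕ :=
  {w ∈ X | G.Adj v w}.ncard

/-- `e(S, T)`: the number of edges of `G` with one endpoint in `S` and the other in `T`. -/
noncomputable def cutCount {V : Type*} (G : SimpleGraph V) (S T : Set V) : ℕ :=
  {e ∈ G.edgeSet | ∃ u ∈ S, ∃ v ∈ T, e = s(u, v)}.ncard

/-- `(S, T)` is a partition of the vertex set of `G` realizing a maximum cut. -/
def IsMaxCut {V : Type*} (G : SimpleGraph V) (S T : Set V) : Prop :=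
  S ∪ T = Set.univ ∧ S ∩ T = ∅ ∧
    ∀ S' T' : Set V, S' ∪ T' = Set.univ → S' ∩ T' = ∅ →
      cutCount G S' T' ≤ cutCount G S T

lemma cutCount_comm {V : Type*} (G : SimpleGraph V) (S T : Set V) :
    cutCount G S T = cutCount G T S := by
  unfold cutCount
  congr 1
  ext e
  simp only [mem_setOf_eq]
  constructor <;> rintro ⟨he, a, ha, b, hb, rfl⟩ <;> exact ⟨he, b, hb, a, ha, Sym2.eq_swap⟩

lemma isMaxCut_comm {V : Type*} {G : SimpleGraph V} {S T : Set V} (h : IsMaxCut G S T) :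
    IsMaxCut G T S := by
  obtain ⟨hU, hI, hm⟩ := h
  refine ⟨by rw [union_comm]; exact hU, by rw [inter_comm]; exact hI, fun S' T' h1 h2 => ?_⟩
  rw [← cutCount_comm G S T]
  exact hm S' T' h1 h2

lemma maxcut_degIn_le {V : Type*} [Fintype V] [DecidableEq V] (G : SimpleGraph V)
    {S T : Set V} (h : IsMaxCut G S T) {v : V} (hv : v ∈ S) :
    degIn G S v ≤ degIn G T v := by
  obtain ⟨hU, hI, hm⟩ := h
  have hU0 : ∀ x : V, x ∈ S ∨ x ∈ T := fun x => by
    have : x ∈ S ∪ T := by rw [hU]; exact mem_univ x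
    exact this
  have hI0 : ∀ x : V, x ∈ S → x ∈ T → False := fun x hs ht => by
    have : x ∈ S ∩ T := ⟨hs, ht⟩
    rw [hI] at this; exact this
  set E0 : Set (Sym2 V) :=
    {e | e ∈ G.edgeSet ∧ (∃ a ∈ S, ∃ b ∈ T, e = s(a, b)) ∧ v ∉ e} with hE0
  have hC : {e | e ∈ G.edgeSet ∧ ∃ a ∈ S, ∃ b ∈ T, e = s(a, b)}
      = E0 ∪ ((fun w => s(v, w)) '' {w ∈ T | G.Adj v w}) := by
    ext e
    simp only [hE0, mem_setOf_eq, mem_union, mem_image]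
    constructor
    · rintro ⟨he, a, ha, b, hb, rfl⟩
      by_cases hve : v ∈ s(a, b)
      · right
        rcases Sym2.mem_iff.mp hve with h | h
        · subst h
          exact ⟨b, ⟨hb, (SimpleGraph.mem_edgeSet G).mp he⟩, rfl⟩
        · exact absurd (h ▸ hb) (fun ht => hI0 v hv ht)
      · exact Or.inl ⟨he, ⟨a, ha, b, hb, rfl⟩, hve⟩
    · rintro (⟨he, hex, _⟩ | ⟨w, ⟨hwT, hadj⟩, rfl⟩)
      · exact ⟨he, hex⟩
      · exact ⟨(SimpleGraph.mem_edgeSet G).mpr hadj, v, hv, w, hwT, rfl⟩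
  have hC' : {e | e ∈ G.edgeSet ∧ ∃ a ∈ S \ {v}, ∃ b ∈ T ∪ {v}, e = s(a, b)}
      = E0 ∪ ((fun w => s(v, w)) '' {w ∈ S | G.Adj v w}) := by
    ext e
    simp only [hE0, mem_setOf_eq, mem_union, mem_image, mem_diff, mem_singleton_iff]
    constructor
    · rintro ⟨he, a, ⟨haS, hav⟩, b, hb, rfl⟩
      by_cases hve : v ∈ s(a, b)
      · right
        rcases Sym2.mem_iff.mp hve with h | h
        · exact absurd h.symm hav
        · subst h
          exact ⟨a, ⟨haS, ((SimpleGraph.mem_edgeSet G).mp he).symm⟩, Sym2.eq_swap⟩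
      · left
        refine ⟨he, ⟨a, haS, b, ?_, rfl⟩, hve⟩
        rcases hb with hb | hb
        · exact hb
        · exact absurd (hb ▸ Sym2.mem_mk_right a b) hve
    · rintro (⟨he, ⟨a, ha, b, hb, rfl⟩, hve⟩ | ⟨w, ⟨hwS, hadj⟩, rfl⟩)
      · exact ⟨he, a, ⟨ha, fun h => hve (h ▸ Sym2.mem_mk_left a b)⟩, b, Or.inl hb, rfl⟩
      · exact ⟨(SimpleGraph.mem_edgeSet G).mpr hadj, w, ⟨hwS, hadj.ne'⟩, v, Or.inr rfl, Sym2.eq_swap⟩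
  have hdisj : ∀ X : Set V, Disjoint E0 ((fun w => s(v, w)) '' {w ∈ X | G.Adj v w}) := by
    intro X
    rw [Set.disjoint_left]
    rintro e ⟨_, _, hve⟩ ⟨w, hw, rfl⟩
    exact hve (Sym2.mem_mk_left v w)
  have hinj : ∀ X : Set V, InjOn (fun w => s(v, w)) {w ∈ X | G.Adj v w} := by
    intro X w hw w' hw' h
    rcases Sym2.eq_iff.mp h with ⟨_, h2⟩ | ⟨h1, _⟩
    · exact h2
    · exact absurd h1.symm hw'.2.ne'
  have e1 : cutCount G S T = E0.ncard + degIn G T v := by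
    unfold cutCount
    rw [show {e ∈ G.edgeSet | ∃ u ∈ S, ∃ w ∈ T, e = s(u, w)}
        = E0 ∪ ((fun w => s(v, w)) '' {w ∈ T | G.Adj v w}) from hC,
      Set.ncard_union_eq (hdisj T) (Set.toFinite _) (Set.toFinite _),
      Set.ncard_image_of_injOn (hinj T)]
    rfl
  have e2 : cutCount G (S \ {v}) (T ∪ {v}) = E0.ncard + degIn G S v := by
    unfold cutCount
    rw [show {e ∈ G.edgeSet | ∃ u ∈ S \ {v}, ∃ w ∈ T ∪ {v}, e = s(u, w)}
        = E0 ∪ ((fun w => s(v, w)) '' {w ∈ S | G.Adj v w}) from hC',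
      Set.ncard_union_eq (hdisj S) (Set.toFinite _) (Set.toFinite _),
      Set.ncard_image_of_injOn (hinj S)]
    rfl
  have hU' : (S \ {v}) ∪ (T ∪ {v}) = Set.univ := by
    ext x
    simp only [mem_union, mem_diff, mem_singleton_iff, mem_univ, iff_true]
    by_cases hx : x = v
    · tauto
    · rcases hU0 x with h | h <;> tauto
  have hI' : (S \ {v}) ∩ (T ∪ {v}) = ∅ := by
    ext x
    simp only [mem_inter_iff, mem_diff, mem_singleton_iff, mem_union, mem_empty_iff_false,
      iff_false, not_and]
    rintro ⟨hxS, hxv⟩ (hxT | rfl)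
    · exact hI0 x hxS hxT
    · exact hxv rfl
  have := hm (S \ {v}) (T ∪ {v}) hU' hI'
  rw [e1, e2] at this
  omega

lemma deg_split {V : Type*} [Fintype V] [DecidableEq V] (G : SimpleGraph V)
    {S T : Set V} (hU : S ∪ T = Set.univ) (hI : S ∩ T = ∅) (v : V) :
    (G.neighborSet v).ncard = degIn G S v + degIn G T v := by
  have hset : G.neighborSet v = {w ∈ S | G.Adj v w} ∪ {w ∈ T | G.Adj v w} := by
    ext w
    simp only [SimpleGraph.mem_neighborSet, mem_union, mem_setOf_eq]
    constructor
    · intro h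
      have : w ∈ S ∪ T := by rw [hU]; exact mem_univ w
      rcases this with hw | hw
      · exact Or.inl ⟨hw, h⟩
      · exact Or.inr ⟨hw, h⟩
    · rintro (⟨_, h⟩ | ⟨_, h⟩) <;> exact h
  have hdisj : Disjoint {w ∈ S | G.Adj v w} {w ∈ T | G.Adj v w} := by
    rw [Set.disjoint_left]
    rintro w ⟨hwS, _⟩ ⟨hwT, _⟩
    have : w ∈ S ∩ T := ⟨hwS, hwT⟩
    rw [hI] at this
    exact this
  rw [hset, Set.ncard_union_eq hdisj (Set.toFinite _) (Set.toFinite _)]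
  rfl

lemma key_lemma {n : ℕ} (r : ℕ) (hn : 180 * (r + 1) ≤ n) (ε : ℝ) (hε : 0 < ε)
    (h2 : 90 * Real.sqrt ε < 1) (G : SimpleGraph (Fin n)) (hbf : BookFree r G)
    (S T : Set (Fin n)) (hmax : IsMaxCut G S T)
    (hT : (T.ncard : ℝ) ≤ (1 / 2 + 3 / 2 * Real.sqrt ε) * n)
    (L W : Set (Fin n))
    (hL : ∀ u, u ∉ L → (1 / 2 - 4 * Real.sqrt ε) * n < ((G.neighborSet u).ncard : ℝ))
    (hW : ∀ u ∈ S, u ∉ W → (degIn G S u : ℝ) < 7 / 2 * Real.sqrt ε * n)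
    (hLW : ((L ∪ W).ncard : ℝ) < 7 / 2 * Real.sqrt ε * n)
    (v : Fin n) (hvS : v ∈ S) (hvd : 7 / 2 * Real.sqrt ε * n ≤ (degIn G S v : ℝ))
    (hvL : v ∉ L) : False := by
  obtain ⟨hU, hI, -⟩ := id hmax
  have hST : degIn G S v ≤ degIn G T v := maxcut_degIn_le G hmax hvS
  -- find a good neighbour u of v inside S
  have hcard : (L ∪ W).ncard < degIn G S v := by
    exact_mod_cast lt_of_lt_of_le hLW hvd
  have hnsub : ¬ ({w ∈ S | G.Adj v w} ⊆ L ∪ W) := by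
    intro hsub
    have := Set.ncard_le_ncard hsub (Set.toFinite _)
    have hd : degIn G S v = ({w ∈ S | G.Adj v w}).ncard := rfl
    omega
  obtain ⟨u, hu, huLW⟩ := not_subset.mp hnsub
  obtain ⟨huS, hadj⟩ := hu
  have huL : u ∉ L := fun h => huLW (Or.inl h)
  have huW : u ∉ W := fun h => huLW (Or.inr h)
  have hdu := hL u huL
  have hdv := hL v hvL
  have hduS := hW u huS huW
  have eu : ((G.neighborSet u).ncard : ℝ) = (degIn G S u : ℝ) + (degIn G T u : ℝ) := by
    exact_mod_cast congrArg (Nat.cast : ℕ → ℝ) (deg_split G hU hI u)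
  have ev : ((G.neighborSet v).ncard : ℝ) = (degIn G S v : ℝ) + (degIn G T v : ℝ) := by
    exact_mod_cast congrArg (Nat.cast : ℕ → ℝ) (deg_split G hU hI v)
  have hSTr : (degIn G S v : ℝ) ≤ (degIn G T v : ℝ) := by exact_mod_cast hST
  -- common neighbours of u and v inside T
  set A := {w ∈ T | G.Adj u w} with hA
  set B := {w ∈ T | G.Adj v w} with hB
  have hIE : ((A ∩ B).ncard : ℝ) + ((A ∪ B).ncard : ℝ)
      = ((degIn G T u : ℝ)) + ((degIn G T v : ℝ)) := by
    have := Set.ncard_inter_add_ncard_union A B (Set.toFinite _) (Set.toFinite _)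
    exact_mod_cast this
  have hUT : ((A ∪ B).ncard : ℝ) ≤ (T.ncard : ℝ) := by
    have : A ∪ B ⊆ T := by
      rintro w (⟨hw, -⟩ | ⟨hw, -⟩) <;> exact hw
    exact_mod_cast Set.ncard_le_ncard this (Set.toFinite _)
  have hbook : ((A ∩ B).ncard : ℝ) ≤ (r : ℝ) := by
    have hsub : A ∩ B ⊆ {w : Fin n | G.Adj v w ∧ G.Adj u w} := by
      rintro w ⟨⟨-, hwu⟩, ⟨-, hwv⟩⟩
      exact ⟨hwv, hwu⟩
    exact_mod_cast le_trans (Set.ncard_le_ncard hsub (Set.toFinite _)) (hbf v u hadj)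
  -- arithmetic
  have hs0 : (0 : ℝ) < Real.sqrt ε := Real.sqrt_pos.mpr hε
  have hnr : (180 : ℝ) * (r + 1) ≤ (n : ℝ) := by exact_mod_cast hn
  have hn0 : (0 : ℝ) ≤ (n : ℝ) := Nat.cast_nonneg n
  have hsn : Real.sqrt ε * (n : ℝ) ≤ 1 / 90 * (n : ℝ) := by nlinarith
  nlinarith [hdu, hdv, hduS, hvd, hSTr, hIE, hUT, hbook, hT, eu, ev]

/-- Let `r ≥ 1` and `ε > 0` with `60r√ε < 1` and `90√ε < 1`.  For all sufficiently large `n`: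
if `G` is a `B_{r+1}`-free graph on `n` vertices with a maximum-cut partition `V(G) = S ∪ T`
satisfying `(1/2 - (3/2)√ε)n ≤ |S|, |T| ≤ (1/2 + (3/2)√ε)n`,
`L = {v : d(v) ≤ (1/2 - 4√ε)n}`, `W = {v ∈ S : d_S(v) ≥ (7/2)√ε n} ∪
{v ∈ T : d_T(v) ≥ (7/2)√ε n}`, `|L| ≤ √ε·n` and `|W| ≤ (4/7)√ε·n`, then `W ⊆ L`. -/
theorem stmt_11 (r : ℕ) (hr : 1 ≤ r) (ε : ℝ) (hε : 0 < ε)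
    (h1 : 60 * (r : ℝ) * Real.sqrt ε < 1) (h2 : 90 * Real.sqrt ε < 1) :
    ∃ n₀ : ℕ, ∀ n : ℕ, n₀ ≤ n →
      ∀ G : SimpleGraph (Fin n), BookFree r G →
      ∀ S T : Set (Fin n), IsMaxCut G S T →
        ((1 / 2 - 3 / 2 * Real.sqrt ε) * (n : ℝ) ≤ (S.ncard : ℝ)) →
        ((S.ncard : ℝ) ≤ (1 / 2 + 3 / 2 * Real.sqrt ε) * (n : ℝ)) →
        ((1 / 2 - 3 / 2 * Real.sqrt ε) * (n : ℝ) ≤ (T.ncard : ℝ)) →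
        ((T.ncard : ℝ) ≤ (1 / 2 + 3 / 2 * Real.sqrt ε) * (n : ℝ)) →
        ∀ L W : Set (Fin n),
          L = {v | ((G.neighborSet v).ncard : ℝ) ≤ (1 / 2 - 4 * Real.sqrt ε) * (n : ℝ)} →
          W = {v ∈ S | (7 / 2 : ℝ) * Real.sqrt ε * (n : ℝ) ≤ (degIn G S v : ℝ)} ∪
              {v ∈ T | (7 / 2 : ℝ) * Real.sqrt ε * (n : ℝ) ≤ (degIn G T v : ℝ)} →
          ((L.ncard : ℝ) ≤ Real.sqrt ε * (n : ℝ)) →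
          ((W.ncard : ℝ) ≤ 4 / 7 * Real.sqrt ε * (n : ℝ)) →
          W ⊆ L := by
  refine ⟨180 * (r + 1), fun n hn G hbf S T hmax hS1 hS2 hT1 hT2 L W hLdef hWdef hLc hWc => ?_⟩
  intro w hw
  by_contra hwL
  subst hLdef
  subst hWdef
  have hs0 : (0 : ℝ) < Real.sqrt ε := Real.sqrt_pos.mpr hε
  have hn0 : (0 : ℝ) < (n : ℝ) := by
    have : 1 ≤ n := by omega
    exact_mod_cast Nat.lt_of_lt_of_le Nat.zero_lt_one this
  set L := {v : Fin n | ((G.neighborSet v).ncard : ℝ) ≤ (1 / 2 - 4 * Real.sqrt ε) * (n : ℝ)}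
    with hLs
  set W := {v ∈ S | (7 / 2 : ℝ) * Real.sqrt ε * (n : ℝ) ≤ (degIn G S v : ℝ)} ∪
      {v ∈ T | (7 / 2 : ℝ) * Real.sqrt ε * (n : ℝ) ≤ (degIn G T v : ℝ)} with hWs
  have hLWc : ((L ∪ W).ncard : ℝ) < 7 / 2 * Real.sqrt ε * (n : ℝ) := by
    have h := Set.ncard_union_le L W
    have h' : ((L ∪ W).ncard : ℝ) ≤ (L.ncard : ℝ) + (W.ncard : ℝ) := by exact_mod_cast h
    nlinarith
  have hL' : ∀ u, u ∉ L → (1 / 2 - 4 * Real.sqrt ε) * (n : ℝ) < ((G.neighborSet u).ncard : ℝ) :=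
    fun u hu => not_le.mp (fun h => hu h)
  rcases hw with ⟨hwS, hwd⟩ | ⟨hwT, hwd⟩
  · refine key_lemma r hn ε hε h2 G hbf S T hmax hT2 L W hL' ?_ hLWc w hwS hwd hwL
    intro u huS huW
    by_contra hc
    exact huW (Or.inl ⟨huS, not_lt.mp hc⟩)
  · refine key_lemma r hn ε hε h2 G hbf T S (isMaxCut_comm hmax) hS2 L W hL' ?_ hLWc w hwT hwd hwL
    intro u huT huW
    by_contra hc
    exact huW (Or.inr ⟨huT, not_lt.mp hc⟩)
end
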